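/- The series whose terms are 1/( (4a² − b²)·(4c² − d²)·(4(a+c)² − (b+d)²) ), summed over all quadruples (a,b,c,d) of nonnegative integers with a ≥ b, c ≥ d and a·d − b·c = 1, converges and its sum equals ( 4/3 − log 3 ) / 32. -/

import Mathlib

/-- Quadruples `(a,b,c,d)` of integers with `a ≥ b ≥ 0`, `c ≥ d ≥ 0` and `a·d − b·c = 1`. -/
def T : Set (ℤ × ℤ × ℤ × ℤ) :=
  {p | p.2.1 ≤ p.1 ∧ 0 ≤ p.2.1 ∧ p.2.2.2 ≤ p.2.2.1 ∧ 0 ≤ p.2.2.2 ∧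
    p.1 * p.2.2.2 - p.2.1 * p.2.2.1 = 1}

/-!
Read `(a, b, c, d) ∈ T` as the Farey interval `[b/a, d/c] ⊆ [0, 1]`, of width `1/(ac)`. These
intervals form the Stern–Brocot tree (`node`): the root is `[0, 1]` and each interval is split at
its mediant `(b+d)/(a+c)`. The summand of a node is the amount by which its `potential` exceeds
the potentials of its two children, so the sum over the first `n` levels telescopes to
`potential root - Gₙ = 1/24 - Gₙ`, where `Gₙ` is the total potential of level `n`. On an interval
of width `w` the potential differs from the increment of `logPotential` by at most `w²/16` (mean
value theorem); these increments add up to `logPotential 1 - logPotential 0 = log 3 / 32` over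
every level, while the widths at level `n` are at most `2/(n+2)` and add up to `1`. Hence
`Gₙ → log 3 / 32`.
-/

open Real Filter Topology Finset

section LevelSum

variable {M : Type*} [AddCommMonoid M]

def levelSum (f : List Bool → M) (n : ℕ) : M := ∑ v : Fin n → Bool, f (List.ofFn v)

@[simp]
lemma levelSum_zero (f : List Bool → M) : levelSum f 0 = f [] := by
  simp [levelSum]

lemma levelSum_succ (f : List Bool → M) (n : ℕ) :
    levelSum f (n + 1) = levelSum (fun l => f (true :: l) + f (false :: l)) n := by
  rw [levelSum, ← (Fin.consEquiv fun _ => Bool).sum_comp, Fintype.sum_prod_type,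
    Fintype.sum_bool, levelSum, ← Finset.sum_add_distrib]
  simp [Fin.consEquiv, List.ofFn_succ]

lemma levelSum_eq_of_split {f : List Bool → M} (h : ∀ l, f l = f (true :: l) + f (false :: l))
    (n : ℕ) : levelSum f n = f [] := by
  induction n with
  | zero => exact levelSum_zero f
  | succ n ih => rw [levelSum_succ, ← ih]; simp only [← h]

end LevelSum

lemma sum_range_levelSum {M : Type*} [AddCommGroup M] {f g : List Bool → M}
    (h : ∀ l, g l = f l + g (true :: l) + g (false :: l)) (N : ℕ) :
    ∑ k ∈ range N, levelSum f k = g [] - levelSum g N := by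
  induction N with
  | zero => simp
  | succ N ih =>
    have hsplit : levelSum g N =
        levelSum f N + levelSum (fun l => g (true :: l) + g (false :: l)) N := by
      rw [levelSum, levelSum, levelSum, ← sum_add_distrib]
      exact sum_congr rfl fun v _ => by rw [h, add_assoc]
    rw [sum_range_succ, ih, levelSum_succ g, hsplit]
    abel

lemma hasSum_of_hasSum_levelSum {f : List Bool → ℝ} (hf : 0 ≤ f) {s : ℝ}
    (h : HasSum (levelSum f) s) : HasSum f s := by
  rw [← List.equivSigmaTuple.symm.hasSum_iff]
  have hlevel (n : ℕ) : HasSum (fun v : Fin n → Bool => f (List.ofFn v)) (levelSum f n) :=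
    hasSum_fintype _
  refine h.sigma_of_hasSum hlevel ?_
  change Summable fun q : Σ n, Fin n → Bool => f (List.ofFn q.2)
  rw [summable_sigma_of_nonneg fun _ => hf _]
  exact ⟨fun n => (hlevel n).summable, h.summable.congr fun n => (hlevel n).tsum_eq.symm⟩

lemma hasSum_of_telescoping {f g : List Bool → ℝ} (hf : 0 ≤ f)
    (h : ∀ l, g l = f l + g (true :: l) + g (false :: l)) {L : ℝ}
    (hg : Tendsto (levelSum g) atTop (𝓝 L)) : HasSum f (g [] - L) := by
  refine hasSum_of_hasSum_levelSum hf ?_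
  rw [hasSum_iff_tendsto_nat_of_nonneg (f := levelSum f) fun n => sum_nonneg fun v _ => hf _]
  simp only [sum_range_levelSum h]
  exact hg.const_sub _

lemma abs_inv_sub_inv_four_sub_sq_le {s x y ξ : ℝ} (hs : s = 1 ∨ s = -1) (hx : 0 ≤ x)
    (hxξ : x ≤ ξ) (hξy : ξ ≤ y) (hy : y ≤ 1) :
    |((2 - s * x) * (2 + s * y))⁻¹ - (4 - ξ ^ 2)⁻¹| ≤ (y - x) / 2 := by
  have hu : 2 ≤ (2 - s * x) * (2 + s * y) := by
    rcases hs with rfl | rfl <;> nlinarith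
  have hv : 3 ≤ 4 - ξ ^ 2 := by nlinarith
  have hnum : |4 - ξ ^ 2 - (2 - s * x) * (2 + s * y)| ≤ 3 * (y - x) := by
    rw [abs_le]; rcases hs with rfl | rfl <;> constructor <;> nlinarith
  have huv : 0 < (2 - s * x) * (2 + s * y) * (4 - ξ ^ 2) := by positivity
  rw [inv_sub_inv (by positivity) (by positivity), abs_div, abs_of_pos huv, div_le_iff₀ huv]
  nlinarith [mul_le_mul hu hv (by norm_num) (by linarith), sub_nonneg.2 (hxξ.trans hξy)]

noncomputable def logPotential (t : ℝ) : ℝ := (log (2 + t) - log (2 - t)) / 32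

lemma hasDerivAt_logPotential {t : ℝ} (ht : |t| < 2) :
    HasDerivAt logPotential ((4 - t ^ 2)⁻¹ / 8) t := by
  rw [abs_lt] at ht
  have h₁ : HasDerivAt (fun s => log (2 + s)) (2 + t)⁻¹ t := by
    simpa using ((hasDerivAt_id' t).const_add 2).log (by linarith)
  have h₂ : HasDerivAt (fun s => log (2 - s)) (-(2 - t)⁻¹) t := by
    simpa [neg_div] using ((hasDerivAt_id' t).const_sub 2).log (by linarith)
  refine ((h₁.sub h₂).div_const 32).congr_deriv ?_
  have hp : 2 + t ≠ 0 := by linarith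
  have hm : 2 - t ≠ 0 := by linarith
  rw [show 4 - t ^ 2 = (2 + t) * (2 - t) by ring]
  field_simp
  ring

lemma abs_mul_sub_logPotential_sub_le {x y : ℝ} (hx : 0 ≤ x) (hxy : x < y) (hy : y ≤ 1) :
    |(y - x) * ((((2 - x) * (2 + y))⁻¹ + ((2 + x) * (2 - y))⁻¹) / 16) -
      (logPotential y - logPotential x)| ≤ (y - x) ^ 2 / 16 := by
  have hderiv : ∀ t ∈ Set.Icc x y, HasDerivAt logPotential ((4 - t ^ 2)⁻¹ / 8) t := fun t ht =>
    hasDerivAt_logPotential (abs_lt.2 ⟨by linarith [ht.1], by linarith [ht.2]⟩)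
  obtain ⟨ξ, ⟨hxξ, hξy⟩, hξ⟩ := exists_hasDerivAt_eq_slope logPotential _ hxy
    (fun t ht => (hderiv t ht).continuousAt.continuousWithinAt)
    (fun t ht => hderiv t (Set.Ioo_subset_Icc_self ht))
  have hK : logPotential y - logPotential x = (y - x) * ((4 - ξ ^ 2)⁻¹ / 8) := by
    rw [hξ]; field_simp [sub_ne_zero.2 hxy.ne']
  have h₁ := abs_inv_sub_inv_four_sub_sq_le (Or.inl rfl) hx hxξ.le hξy.le hy
  have h₂ := abs_inv_sub_inv_four_sub_sq_le (Or.inr rfl) hx hxξ.le hξy.le hy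
  simp only [one_mul, neg_one_mul, sub_neg_eq_add, ← sub_eq_add_neg] at h₁ h₂
  set V := (4 - ξ ^ 2)⁻¹
  rw [hK, ← mul_sub, abs_mul, abs_of_pos (sub_pos.2 hxy),
    show ∀ A B : ℝ, (A + B) / 16 - V / 8 = ((A - V) + (B - V)) / 16 from fun _ _ => by ring,
    abs_div, abs_of_pos (by norm_num : (0 : ℝ) < 16)]
  calc (y - x) * (|((2 - x) * (2 + y))⁻¹ - V + (((2 + x) * (2 - y))⁻¹ - V)| / 16)
      ≤ (y - x) * (((y - x) / 2 + (y - x) / 2) / 16) := by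
        gcongr; exact (abs_add_le _ _).trans (add_le_add h₁ h₂)
    _ = (y - x) ^ 2 / 16 := by ring

lemma telescoping_identity {u u' v v' : ℝ} (hu : u ≠ 0) (hu' : u' ≠ 0) (hv : v ≠ 0)
    (hv' : v' ≠ 0) (huv' : u + v' ≠ 0) (hu'v : u' + v ≠ 0) (h : u * v - u' * v' = 4) :
    (1 / (u * v) + 1 / (u' * v')) / 16 =
      1 / (u * u' * (v * v') * ((u + v') * (u' + v))) +
      (1 / (u * (u' + v)) + 1 / (u' * (u + v'))) / 16 +
      (1 / ((u + v') * v) + 1 / ((u' + v) * v')) / 16 := by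
  field_simp
  linear_combination (u * v - u' * v' + 4) * h

namespace SternBrocot

abbrev Quad := ℤ × ℤ × ℤ × ℤ

def child : Bool → Quad → Quad
  | true, (a, b, c, d) => (a, b, a + c, b + d)
  | false, (a, b, c, d) => (a + c, b + d, c, d)

def root : Quad := (1, 0, 1, 1)

def node : List Bool → Quad
  | [] => root
  | β :: l => child β (node l)

lemma one_le_of_mem_T {a b c d : ℤ} (h : (a, b, c, d) ∈ T) :
    1 ≤ a ∧ 1 ≤ c ∧ 1 ≤ d := by
  obtain ⟨h1, h2, h3, h4, h5⟩ := h
  refine ⟨?_, ?_, ?_⟩ <;> nlinarith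

lemma child_mem_T {p : Quad} (hp : p ∈ T) (β : Bool) : child β p ∈ T := by
  obtain ⟨a, b, c, d⟩ := p
  obtain ⟨h1, h2, h3, h4, h5⟩ := hp
  cases β <;> refine ⟨?_, ?_, ?_, ?_, ?_⟩ <;> dsimp only [child] at * <;> linarith

lemma node_mem_T (l : List Bool) : node l ∈ T := by
  induction l with
  | nil => norm_num [node, root, T]
  | cons β l ih => exact child_mem_T ih β

lemma length_add_two_le (l : List Bool) :
    (l.length : ℤ) + 2 ≤ (node l).1 + (node l).2.2.1 := by
  induction l with
  | nil => decide
  | cons β l ih =>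
    have hmem := node_mem_T l
    obtain ⟨a, b, c, d⟩ := node l
    have := one_le_of_mem_T hmem
    cases β <;> simp only [node, child, List.length_cons] at * <;> push_cast <;> linarith

lemma child_ne_root {p : Quad} (hp : p ∈ T) (β : Bool) : child β p ≠ root := by
  obtain ⟨a, b, c, d⟩ := p
  have := one_le_of_mem_T hp
  cases β <;> simp only [child, root, ne_eq, Prod.mk.injEq] <;> omega

lemma child_inj {p q : Quad} (hp : p ∈ T) (hq : q ∈ T) {β γ : Bool}
    (h : child β p = child γ q) : β = γ ∧ p = q := by
  obtain ⟨a, b, c, d⟩ := p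
  obtain ⟨a', b', c', d'⟩ := q
  have := one_le_of_mem_T hp
  have := one_le_of_mem_T hq
  cases β <;> cases γ <;>
    simp only [child, Prod.mk.injEq, Bool.false_eq_true, Bool.true_eq_false, true_and] at h ⊢ <;>
    omega

lemma node_injective : Function.Injective node := by
  intro l₁
  induction l₁ with
  | nil =>
    rintro (_ | ⟨β, l⟩) h
    · rfl
    · exact absurd h.symm (child_ne_root (node_mem_T l) β)
  | cons β l₁ ih =>
    rintro (_ | ⟨γ, l₂⟩) h
    · exact absurd h (child_ne_root (node_mem_T l₁) β)
    · obtain ⟨rfl, hl⟩ := child_inj (node_mem_T l₁) (node_mem_T l₂) h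
      rw [ih hl]

lemma exists_child_eq {p : Quad} (hp : p ∈ T) (hroot : p ≠ root) :
    ∃ q ∈ T, ∃ β, child β q = p ∧ (q.1 + q.2.2.1).toNat < (p.1 + p.2.2.1).toNat := by
  obtain ⟨a, b, c, d⟩ := p
  have ⟨ha, hc, hd⟩ := one_le_of_mem_T hp
  obtain ⟨h1, h2, h3, h4, h5⟩ := hp
  dsimp only at *
  by_cases hdb : d ≤ b
  · refine ⟨(a - c, b - d, c, d), ⟨?_, ?_, h3, h4, ?_⟩, false, ?_, ?_⟩
    · nlinarith [mul_nonneg (sub_nonneg.2 h3) (sub_nonneg.2 hdb)]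
    · linarith
    · linear_combination h5
    · simp only [child]; ring_nf
    · dsimp only; omega
  · have hbd : d - b ≤ c - a := by
      rcases h2.eq_or_lt with rfl | hb
      · obtain rfl : a = 1 := by nlinarith
        obtain rfl : d = 1 := by linarith
        have : c ≠ 1 := fun hc => hroot (by rw [hc]; rfl)
        omega
      · nlinarith [mul_nonneg (sub_nonneg.2 h1) (by omega : (0:ℤ) ≤ d - b - 1)]
    refine ⟨(a, b, c - a, d - b), ⟨h1, h2, hbd, ?_, ?_⟩, true, ?_, ?_⟩
    · linarith
    · linear_combination h5
    · simp only [child]; ring_nf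
    · dsimp only; omega

lemma exists_node_eq (p : Quad) (hp : p ∈ T) : ∃ l, node l = p := by
  by_cases hroot : p = root
  · exact ⟨[], hroot.symm⟩
  obtain ⟨q, hq, β, hqp, hsize⟩ := exists_child_eq hp hroot
  obtain ⟨l, rfl⟩ := exists_node_eq q hq
  exact ⟨β :: l, hqp⟩
termination_by (p.1 + p.2.2.1).toNat
decreasing_by exact hsize

noncomputable def nodeEquiv : List Bool ≃ T :=
  Equiv.ofBijective (fun l => ⟨node l, node_mem_T l⟩)
    ⟨fun _ _ h => node_injective (congrArg Subtype.val h),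
     fun p => (exists_node_eq p.1 p.2).imp fun _ h => Subtype.ext h⟩

noncomputable def summand (p : Quad) : ℝ :=
  1 / ((4 * (p.1 : ℝ) ^ 2 - (p.2.1 : ℝ) ^ 2) *
    (4 * (p.2.2.1 : ℝ) ^ 2 - (p.2.2.2 : ℝ) ^ 2) *
    (4 * ((p.1 : ℝ) + (p.2.2.1 : ℝ)) ^ 2 - ((p.2.1 : ℝ) + (p.2.2.2 : ℝ)) ^ 2))

noncomputable def potential : Quad → ℝ
  | (a, b, c, d) =>
    (1 / ((2 * (a : ℝ) - b) * (2 * c + d)) + 1 / ((2 * (a : ℝ) + b) * (2 * c - d))) / 16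

noncomputable def increment (φ : ℝ → ℝ) : Quad → ℝ
  | (a, b, c, d) => φ ((d : ℝ) / c) - φ ((b : ℝ) / a)

lemma cast_of_mem_T {a b c d : ℤ} (hp : (a, b, c, d) ∈ T) :
    (0 : ℝ) ≤ b ∧ (b : ℝ) ≤ a ∧ (0 : ℝ) < d ∧ (d : ℝ) ≤ c ∧
      (a : ℝ) * d - b * c = 1 := by
  have ⟨_, _, hd⟩ := one_le_of_mem_T hp
  obtain ⟨h1, h2, h3, _, h5⟩ := hp
  exact ⟨mod_cast h2, mod_cast h1, mod_cast hd, mod_cast h3, mod_cast h5⟩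

lemma summand_nonneg {p : Quad} (hp : p ∈ T) : 0 ≤ summand p := by
  obtain ⟨a, b, c, d⟩ := p
  obtain ⟨hb, hba, hd, hdc, hdet⟩ := cast_of_mem_T hp
  have : (0 : ℝ) < a := by nlinarith
  have : (0 : ℝ) < 4 * (a + c) ^ 2 - (b + d) ^ 2 := by nlinarith
  have : (0 : ℝ) < 4 * c ^ 2 - d ^ 2 := by nlinarith
  have : (0 : ℝ) < 4 * a ^ 2 - b ^ 2 := by nlinarith
  unfold summand
  positivity

lemma potential_eq_summand_add {p : Quad} (hp : p ∈ T) :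
    potential p = summand p + potential (child true p) + potential (child false p) := by
  obtain ⟨a, b, c, d⟩ := p
  obtain ⟨hb, hba, hd, hdc, hdet⟩ := cast_of_mem_T hp
  simp only [potential, summand, child]
  push_cast
  convert telescoping_identity (u := 2 * a - b) (u' := 2 * a + b) (v := 2 * c + d)
    (v' := 2 * c - d) (by nlinarith) (by nlinarith) (by nlinarith) (by nlinarith)
    (by nlinarith) (by nlinarith)
    (by linear_combination 4 * hdet) using 3 <;> ring

lemma increment_child_add (φ : ℝ → ℝ) (p : Quad) :
    increment φ (child true p) + increment φ (child false p) = increment φ p := by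
  obtain ⟨a, b, c, d⟩ := p
  simp only [increment, child]
  ring

lemma levelSum_increment_node (φ : ℝ → ℝ) (n : ℕ) :
    levelSum (increment φ ∘ node) n = φ 1 - φ 0 := by
  rw [levelSum_eq_of_split (f := increment φ ∘ node) fun l =>
    (increment_child_add φ (node l)).symm]
  simp [increment, node, root]

lemma increment_id_eq {p : Quad} (hp : p ∈ T) :
    increment id p = 1 / ((p.1 : ℝ) * p.2.2.1) := by
  obtain ⟨a, b, c, d⟩ := p
  obtain ⟨hb, hba, hd, hdc, hdet⟩ := cast_of_mem_T hp
  have : (a : ℝ) ≠ 0 := by nlinarith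
  have : (c : ℝ) ≠ 0 := by nlinarith
  simp only [increment, id]
  field_simp
  linear_combination hdet

lemma abs_potential_sub_increment_le {p : Quad} (hp : p ∈ T) :
    |potential p - increment logPotential p| ≤ increment id p ^ 2 / 16 := by
  have hw := increment_id_eq hp
  obtain ⟨a, b, c, d⟩ := p
  obtain ⟨hb, hba, hd, hdc, hdet⟩ := cast_of_mem_T hp
  have ha : (0 : ℝ) < a := by nlinarith
  have hc : (0 : ℝ) < c := by nlinarith
  simp only [increment, id] at hw ⊢
  set x : ℝ := b / a
  set y : ℝ := d / c
  have hx : 0 ≤ x := by positivity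
  have hy : y ≤ 1 := (div_le_one hc).2 hdc
  have hxy : x < y := by rw [← sub_pos, hw]; positivity
  have hG : potential (a, b, c, d) =
      (y - x) * ((((2 - x) * (2 + y))⁻¹ + ((2 + x) * (2 - y))⁻¹) / 16) := by
    have : (2 * a - b : ℝ) * (2 * c + d) ≠ 0 := by nlinarith
    have : (2 * a + b : ℝ) * (2 * c - d) ≠ 0 := by nlinarith
    rw [hw]
    simp only [potential, x, y]
    field_simp
  rw [hG]
  exact abs_mul_sub_logPotential_sub_le hx hxy hy

lemma abs_potential_sub_increment_node_le (l : List Bool) :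
    |potential (node l) - increment logPotential (node l)| ≤
      increment id (node l) / (8 * (l.length + 2)) := by
  have hp := node_mem_T l
  have hlen := length_add_two_le l
  refine (abs_potential_sub_increment_le hp).trans ?_
  rw [increment_id_eq hp]
  generalize node l = p at hp hlen
  obtain ⟨a, b, c, d⟩ := p
  have ⟨ha, hc, _⟩ := one_le_of_mem_T hp
  have ha' : (1 : ℝ) ≤ a := by exact_mod_cast ha
  have hc' : (1 : ℝ) ≤ c := by exact_mod_cast hc
  have hlen' : (l.length : ℝ) + 2 ≤ a + c := by exact_mod_cast hlen
  have hac : (l.length : ℝ) + 2 ≤ 2 * (a * c) := by nlinarith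
  dsimp only
  calc (1 / ((a : ℝ) * c)) ^ 2 / 16 = 1 / (a * c) * (1 / (2 * (a * c))) / 8 := by ring
    _ ≤ 1 / (a * c) * (1 / (l.length + 2)) / 8 := by gcongr
    _ = 1 / (a * c) / (8 * (l.length + 2)) := by field_simp

lemma tendsto_levelSum_potential :
    Tendsto (levelSum (potential ∘ node)) atTop (𝓝 (log 3 / 32)) := by
  have hK (n : ℕ) : levelSum (increment logPotential ∘ node) n = log 3 / 32 := by
    norm_num [levelSum_increment_node, logPotential]
  have hw (n : ℕ) : levelSum (increment id ∘ node) n = 1 := by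
    norm_num [levelSum_increment_node]
  have hbound (n : ℕ) : |levelSum (potential ∘ node) n - log 3 / 32| ≤ 1 / (8 * (n + 2)) := by
    rw [← hK n, levelSum, levelSum, ← sum_sub_distrib]
    calc _ ≤ ∑ v : Fin n → Bool, |potential (node (List.ofFn v)) -
          increment logPotential (node (List.ofFn v))| := abs_sum_le_sum_abs _ _
      _ ≤ ∑ v : Fin n → Bool, increment id (node (List.ofFn v)) / (8 * (n + 2)) :=
          sum_le_sum fun v _ => by simpa using abs_potential_sub_increment_node_le (List.ofFn v)
      _ = levelSum (increment id ∘ node) n / (8 * (n + 2)) := (sum_div ..).symm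
      _ = 1 / (8 * (n + 2)) := by rw [hw]
  have hlim : Tendsto (fun n : ℕ => 1 / (8 * ((n : ℝ) + 2))) atTop (𝓝 0) :=
    tendsto_const_nhds.div_atTop <| (tendsto_natCast_atTop_atTop.atTop_add
      tendsto_const_nhds).const_mul_atTop (by norm_num)
  rw [tendsto_iff_norm_sub_tendsto_zero]
  exact squeeze_zero (fun _ => norm_nonneg _) hbound hlim

end SternBrocot

open SternBrocot in
theorem stmt_12 :
    HasSum
      (fun p : T =>
        1 / ((4 * (p.val.1 : ℝ) ^ 2 - (p.val.2.1 : ℝ) ^ 2) *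
          (4 * (p.val.2.2.1 : ℝ) ^ 2 - (p.val.2.2.2 : ℝ) ^ 2) *
          (4 * ((p.val.1 : ℝ) + (p.val.2.2.1 : ℝ)) ^ 2 -
            ((p.val.2.1 : ℝ) + (p.val.2.2.2 : ℝ)) ^ 2)))
      ((4 / 3 - Real.log 3) / 32) := by
  have h := hasSum_of_telescoping (fun l => summand_nonneg (node_mem_T l))
    (fun l => potential_eq_summand_add (node_mem_T l)) tendsto_levelSum_potential
  rw [show potential (node []) - log 3 / 32 = (4 / 3 - log 3) / 32 by
    norm_num [potential, node, root]; ring] at h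
  exact nodeEquiv.hasSum_iff.1 h
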